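/- Let N ≥ 1, let Ω ⊆ ℝ³ be open and T > 0, let Λ : (0,∞)^N → ℝ be continuously differentiable, positive, and positively homogeneous of degree one, let r : (0,∞)^N → ℝ^N be continuous, and let ρ : Ω × (0,T) → (0,∞)^N and v : Ω × (0,T) → ℝ³ be differentiable. Suppose each component satisfies the mass balance with reaction ∂_t ρ_i + div(ρ_i v) = r_i(ρ) pointwise on Ω × (0,T). Then, with w := Λ(ρ), u := ρ/Λ(ρ), and f(w,u) := Σ_{j=1}^N r_j(w u) ∂Λ/∂ρ_j(u), the function w satisfies ∂_t w + div(w v) = f(w,u) pointwise on Ω × (0,T). -/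

import Mathlib

/-!
Write `L = ∇Λ(ρ)`. By the chain and product rules, for every differentiable `φ`,
`∂ₜ φ(ρ) + div(φ(ρ) v) = ∇φ(ρ) · (∂ₜρ + (v·∇)ρ) + φ(ρ) div v`.
Taking for `φ` the coordinates turns the mass balances into `r(ρ) = (∂ₜ + v·∇)ρ + (div v) ρ`;
taking `φ = Λ` and using Euler's relation `L ρ = Λ(ρ)` gives `∂ₜ w + div(w v) = L r(ρ)`.
Finally `w u = ρ`, and `∇Λ(u) = ∇Λ(ρ)` since `∇Λ` is homogeneous of degree zero, so `L r(ρ) = f(w, u)`.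
-/

/-- Partial derivative in time of a function of `(x,t) ∈ ℝ³ × ℝ`. -/
noncomputable def ptime (f : ((Fin 3 → ℝ) × ℝ) → ℝ) (z : (Fin 3 → ℝ) × ℝ) : ℝ :=
  fderiv ℝ f z (0, 1)

/-- `k`-th spatial partial derivative of a function of `(x,t) ∈ ℝ³ × ℝ`. -/
noncomputable def pspace (k : Fin 3) (f : ((Fin 3 → ℝ) × ℝ) → ℝ) (z : (Fin 3 → ℝ) × ℝ) : ℝ :=
  fderiv ℝ f z (Pi.single k 1, 0)

/-- Spatial divergence of a vector field of `(x,t) ∈ ℝ³ × ℝ`. -/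
noncomputable def spaceDiv (F : ((Fin 3 → ℝ) × ℝ) → Fin 3 → ℝ) (z : (Fin 3 → ℝ) × ℝ) : ℝ :=
  ∑ k, pspace k (fun p => F p k) z

open Filter Topology

section Homogeneous

variable {E : Type*} [NormedAddCommGroup E] [NormedSpace ℝ E] {Λ : E → ℝ} {x : E}

theorem fderiv_apply_self_of_homogeneous (hΛ : DifferentiableAt ℝ Λ x)
    (hhom : (fun t : ℝ => Λ (t • x)) =ᶠ[𝓝 1] fun t => t * Λ x) : fderiv ℝ Λ x x = Λ x := by
  have hline : HasDerivAt (fun t : ℝ => t • x) x 1 := by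
    simpa using (hasDerivAt_id (1 : ℝ)).smul_const x
  have hcomp : HasDerivAt (fun t : ℝ => Λ (t • x)) (fderiv ℝ Λ x x) 1 :=
    hΛ.hasFDerivAt.comp_hasDerivAt_of_eq (1 : ℝ) hline (one_smul ℝ x).symm
  have hscale : HasDerivAt (fun t : ℝ => t * Λ x) (Λ x) 1 := by
    simpa using (hasDerivAt_id (1 : ℝ)).mul_const (Λ x)
  exact (hcomp.congr_of_eventuallyEq hhom.symm).unique hscale

theorem fderiv_smul_eq_of_homogeneous {c : ℝ} (hc : c ≠ 0)
    (hhom : (fun y => Λ (c • y)) =ᶠ[𝓝 x] fun y => c * Λ y) : fderiv ℝ Λ (c • x) = fderiv ℝ Λ x := by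
  have h : c • fderiv ℝ Λ (c • x) = fderiv ℝ (fun y => c * Λ y) x :=
    (fderiv_comp_smul c).symm.trans hhom.fderiv_eq
  have hscale : fderiv ℝ (fun y => c * Λ y) x = c • fderiv ℝ Λ x :=
    congrFun (fderiv_const_smul_field (𝕜 := ℝ) (f := Λ) c) x
  exact smul_right_injective _ hc (h.trans hscale)

end Homogeneous

theorem ContinuousLinearMap.apply_eq_sum_mul_single {ι : Type*} [Fintype ι] [DecidableEq ι]
    (L : (ι → ℝ) →L[ℝ] ℝ) (y : ι → ℝ) :
    L y = ∑ j, y j * L (Pi.single j 1) := by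
  conv_lhs => rw [pi_eq_sum_univ' y]
  simp only [map_sum, map_smul, smul_eq_mul]

section Transport

variable {F : Type*} [NormedAddCommGroup F] [NormedSpace ℝ F] {z : (Fin 3 → ℝ) × ℝ}

noncomputable def materialDeriv (ρ : ((Fin 3 → ℝ) × ℝ) → F) (v : ((Fin 3 → ℝ) × ℝ) → Fin 3 → ℝ)
    (z : (Fin 3 → ℝ) × ℝ) : F :=
  fderiv ℝ ρ z (0, 1) + ∑ k, v z k • fderiv ℝ ρ z (Pi.single k 1, 0)

theorem pspace_mul (k : Fin 3) {g h : ((Fin 3 → ℝ) × ℝ) → ℝ} (hg : DifferentiableAt ℝ g z)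
    (hh : DifferentiableAt ℝ h z) :
    pspace k (fun p => g p * h p) z = pspace k g z * h z + g z * pspace k h z := by
  simp only [pspace, fderiv_fun_mul hg hh, add_apply, smul_apply, smul_eq_mul]
  ring

theorem spaceDiv_mul {g : ((Fin 3 → ℝ) × ℝ) → ℝ} {v : ((Fin 3 → ℝ) × ℝ) → Fin 3 → ℝ}
    (hg : DifferentiableAt ℝ g z) (hv : DifferentiableAt ℝ v z) :
    spaceDiv (fun p k => g p * v p k) z = ∑ k, pspace k g z * v z k + g z * spaceDiv v z := by
  simp only [spaceDiv, Finset.mul_sum, ← Finset.sum_add_distrib]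
  exact Finset.sum_congr rfl fun k _ => pspace_mul k hg (differentiableAt_pi.mp hv k)

variable {φ : F → ℝ} {ρ : ((Fin 3 → ℝ) × ℝ) → F}

theorem ptime_comp (hφ : DifferentiableAt ℝ φ (ρ z)) (hρ : DifferentiableAt ℝ ρ z) :
    ptime (fun p => φ (ρ p)) z = fderiv ℝ φ (ρ z) (fderiv ℝ ρ z (0, 1)) := by
  rw [ptime, fderiv_fun_comp z hφ hρ, ContinuousLinearMap.comp_apply]

theorem pspace_comp (k : Fin 3) (hφ : DifferentiableAt ℝ φ (ρ z)) (hρ : DifferentiableAt ℝ ρ z) :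
    pspace k (fun p => φ (ρ p)) z = fderiv ℝ φ (ρ z) (fderiv ℝ ρ z (Pi.single k 1, 0)) := by
  rw [pspace, fderiv_fun_comp z hφ hρ, ContinuousLinearMap.comp_apply]

theorem ptime_add_spaceDiv_comp_mul {v : ((Fin 3 → ℝ) × ℝ) → Fin 3 → ℝ}
    (hφ : DifferentiableAt ℝ φ (ρ z)) (hρ : DifferentiableAt ℝ ρ z)
    (hv : DifferentiableAt ℝ v z) :
    ptime (fun p => φ (ρ p)) z + spaceDiv (fun p k => φ (ρ p) * v p k) z =
      fderiv ℝ φ (ρ z) (materialDeriv ρ v z) + φ (ρ z) * spaceDiv v z := by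
  rw [spaceDiv_mul (g := fun p => φ (ρ p)) (hφ.comp z hρ) hv, ptime_comp hφ hρ]
  simp only [pspace_comp _ hφ hρ, materialDeriv, map_add, map_sum, map_smul, smul_eq_mul, mul_comm]
  ring

end Transport

theorem isOpen_setOf_forall_pos {ι : Type*} [Finite ι] : IsOpen {y : ι → ℝ | ∀ i, 0 < y i} := by
  simp only [Set.ofPred_forall]
  exact isOpen_iInter_of_finite fun i => isOpen_lt continuous_const (continuous_apply i)

theorem volume_extension_with_reaction_general
    (N : ℕ)
    (Ω : Set (Fin 3 → ℝ)) (T : ℝ)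
    (S : Set (Fin N → ℝ)) (hS : S = {y | ∀ i, 0 < y i})
    (Λ : (Fin N → ℝ) → ℝ)
    (hΛ : ContDiffOn ℝ 1 Λ S)
    (hΛpos : ∀ y ∈ S, 0 < Λ y)
    (hhom : ∀ t : ℝ, 0 < t → ∀ y ∈ S, Λ (t • y) = t * Λ y)
    (r : (Fin N → ℝ) → Fin N → ℝ)
    (ρ : ((Fin 3 → ℝ) × ℝ) → Fin N → ℝ)
    (v : ((Fin 3 → ℝ) × ℝ) → Fin 3 → ℝ)
    (hρdiff : ∀ z : (Fin 3 → ℝ) × ℝ, z.1 ∈ Ω → z.2 ∈ Set.Ioo 0 T → DifferentiableAt ℝ ρ z)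
    (hvdiff : ∀ z : (Fin 3 → ℝ) × ℝ, z.1 ∈ Ω → z.2 ∈ Set.Ioo 0 T → DifferentiableAt ℝ v z)
    (hρS : ∀ z : (Fin 3 → ℝ) × ℝ, z.1 ∈ Ω → z.2 ∈ Set.Ioo 0 T → ρ z ∈ S)
    (hpde : ∀ (i : Fin N) (z : (Fin 3 → ℝ) × ℝ), z.1 ∈ Ω → z.2 ∈ Set.Ioo 0 T →
      ptime (fun p => ρ p i) z + spaceDiv (fun p k => ρ p i * v p k) z = r (ρ z) i)
    (w : ((Fin 3 → ℝ) × ℝ) → ℝ) (hw : ∀ z, w z = Λ (ρ z))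
    (u : ((Fin 3 → ℝ) × ℝ) → Fin N → ℝ) (hu : ∀ z, u z = (Λ (ρ z))⁻¹ • ρ z)
    (f : ℝ → (Fin N → ℝ) → ℝ)
    (hf : ∀ (a : ℝ) (b : Fin N → ℝ),
      f a b = ∑ j, r (a • b) j * fderiv ℝ Λ b (Pi.single j 1)) :
    ∀ z : (Fin 3 → ℝ) × ℝ, z.1 ∈ Ω → z.2 ∈ Set.Ioo 0 T →
      ptime w z + spaceDiv (fun p k => w p * v p k) z = f (w z) (u z) := by
  have hSopen : IsOpen S := hS ▸ isOpen_setOf_forall_pos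
  intro z hzΩ hzT
  have hρz := hρS z hzΩ hzT
  have hρ := hρdiff z hzΩ hzT
  have hv := hvdiff z hzΩ hzT
  have hΛρ : DifferentiableAt ℝ Λ (ρ z) :=
    (hΛ.contDiffAt (hSopen.mem_nhds hρz)).differentiableAt one_ne_zero
  have hwpos := hΛpos _ hρz
  set L := fderiv ℝ Λ (ρ z)
  have hreaction : r (ρ z) = materialDeriv ρ v z + spaceDiv v z • ρ z := funext fun i => by
    have hcoord := ptime_add_spaceDiv_comp_mul (φ := fun y => y i) (differentiableAt_apply i _) hρ hv
    have hproj : fderiv ℝ (fun y : Fin N → ℝ => y i) (ρ z) = ContinuousLinearMap.proj i :=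
      (ContinuousLinearMap.proj (R := ℝ) (φ := fun _ : Fin N => ℝ) i).fderiv
    rw [← hpde i z hzΩ hzT, hcoord, hproj]
    simp [mul_comm]
  have heuler : L (ρ z) = Λ (ρ z) := by
    refine fderiv_apply_self_of_homogeneous hΛρ ?_
    filter_upwards [Ioi_mem_nhds one_pos] with t ht using hhom t ht _ hρz
  have hgrad : fderiv ℝ Λ (u z) = L := by
    rw [hu]
    refine fderiv_smul_eq_of_homogeneous (inv_pos.mpr hwpos).ne' ?_
    filter_upwards [hSopen.mem_nhds hρz] with y hy using hhom _ (inv_pos.mpr hwpos) y hy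
  have hwu : w z • u z = ρ z := by
    rw [hw, hu, smul_smul, mul_inv_cancel₀ hwpos.ne', one_smul]
  calc ptime w z + spaceDiv (fun p k => w p * v p k) z
      = L (materialDeriv ρ v z) + Λ (ρ z) * spaceDiv v z := by
        rw [funext hw]
        exact ptime_add_spaceDiv_comp_mul hΛρ hρ hv
    _ = L (r (ρ z)) := by rw [hreaction, map_add, map_smul, heuler, smul_eq_mul, mul_comm]
    _ = f (w z) (u z) := by rw [hf, hwu, hgrad, L.apply_eq_sum_mul_single]

/-- If each `ρ_i` satisfies the mass balance with reaction `∂_t ρ_i + div(ρ_i v) = r_i(ρ)`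
on `Ω × (0,T)`, then `w = Λ(ρ)` satisfies `∂_t w + div(w v) = f(w,u)` with
`u = ρ/Λ(ρ)` and `f(w,u) = Σ_j r_j(w u) ∂Λ/∂ρ_j(u)`. -/
theorem volume_extension_with_reaction
    (N : ℕ) (hN : 1 ≤ N)
    (Ω : Set (Fin 3 → ℝ)) (hΩ : IsOpen Ω) (T : ℝ) (hT : 0 < T)
    (S : Set (Fin N → ℝ)) (hS : S = {y | ∀ i, 0 < y i})
    (Λ : (Fin N → ℝ) → ℝ)
    (hΛ : ContDiffOn ℝ 1 Λ S)
    (hΛpos : ∀ y ∈ S, 0 < Λ y)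
    (hhom : ∀ t : ℝ, 0 < t → ∀ y ∈ S, Λ (t • y) = t * Λ y)
    (r : (Fin N → ℝ) → Fin N → ℝ) (hr : ContinuousOn r S)
    (ρ : ((Fin 3 → ℝ) × ℝ) → Fin N → ℝ)
    (v : ((Fin 3 → ℝ) × ℝ) → Fin 3 → ℝ)
    (hρdiff : ∀ z : (Fin 3 → ℝ) × ℝ, z.1 ∈ Ω → z.2 ∈ Set.Ioo 0 T → DifferentiableAt ℝ ρ z)
    (hvdiff : ∀ z : (Fin 3 → ℝ) × ℝ, z.1 ∈ Ω → z.2 ∈ Set.Ioo 0 T → DifferentiableAt ℝ v z)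
    (hρS : ∀ z : (Fin 3 → ℝ) × ℝ, z.1 ∈ Ω → z.2 ∈ Set.Ioo 0 T → ρ z ∈ S)
    (hpde : ∀ (i : Fin N) (z : (Fin 3 → ℝ) × ℝ), z.1 ∈ Ω → z.2 ∈ Set.Ioo 0 T →
      ptime (fun p => ρ p i) z + spaceDiv (fun p k => ρ p i * v p k) z = r (ρ z) i)
    (w : ((Fin 3 → ℝ) × ℝ) → ℝ) (hw : ∀ z, w z = Λ (ρ z))
    (u : ((Fin 3 → ℝ) × ℝ) → Fin N → ℝ) (hu : ∀ z, u z = (Λ (ρ z))⁻¹ • ρ z)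
    (f : ℝ → (Fin N → ℝ) → ℝ)
    (hf : ∀ (a : ℝ) (b : Fin N → ℝ),
      f a b = ∑ j, r (a • b) j * fderiv ℝ Λ b (Pi.single j 1)) :
    ∀ z : (Fin 3 → ℝ) × ℝ, z.1 ∈ Ω → z.2 ∈ Set.Ioo 0 T →
      ptime w z + spaceDiv (fun p k => w p * v p k) z = f (w z) (u z) :=
  volume_extension_with_reaction_general N Ω T S hS Λ hΛ hΛpos hhom r ρ v hρdiff hvdiff hρS hpde w
    hw u hu f hf
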